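/- A 2-copula C is stochastically increasing in the first component if and only if the associated Markov operator T_C maps decreasing integrable functions on [0,1] to decreasing functions; C is stochastically decreasing in the first component if and only if T_C maps decreasing functions to increasing functions. -/

import Mathlib

open MeasureTheory Set Filter

def IsCopula (C : ℝ → ℝ → ℝ) : Prop :=
  (∀ u ∈ Icc (0:ℝ) 1, C u 0 = 0 ∧ C u 1 = u) ∧
  (∀ v ∈ Icc (0:ℝ) 1, C 0 v = 0 ∧ C 1 v = v) ∧
  (∀ u₁ u₂ v₁ v₂ : ℝ, u₁ ∈ Icc (0:ℝ) 1 → u₂ ∈ Icc (0:ℝ) 1 →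
    v₁ ∈ Icc (0:ℝ) 1 → v₂ ∈ Icc (0:ℝ) 1 → u₁ ≤ u₂ → v₁ ≤ v₂ →
    0 ≤ C u₂ v₂ - C u₂ v₁ - C u₁ v₂ + C u₁ v₁)

/-- Markov product of two copulas: (C₁ * C₂)(u,v) = ∫₀¹ ∂₂C₁(u,t) ∂₁C₂(t,v) dt. -/
noncomputable def MarkovProduct (C₁ C₂ : ℝ → ℝ → ℝ) (u v : ℝ) : ℝ :=
  ∫ t in (0:ℝ)..1, deriv (fun s => C₁ u s) t * deriv (fun s => C₂ s v) t

/-- Stochastically increasing in the first component: u ↦ C(u,v) is concave for each v. -/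
def StochIncr (C : ℝ → ℝ → ℝ) : Prop :=
  ∀ v ∈ Icc (0:ℝ) 1, ConcaveOn ℝ (Icc (0:ℝ) 1) (fun u => C u v)

/-- Stochastically decreasing in the first component: u ↦ C(u,v) is convex for each v. -/
def StochDecr (C : ℝ → ℝ → ℝ) : Prop :=
  ∀ v ∈ Icc (0:ℝ) 1, ConvexOn ℝ (Icc (0:ℝ) 1) (fun u => C u v)

/-- The Markov operator associated to a copula: T_C f (u) = ∂_u ∫₀¹ ∂_v C(u,v) f(v) dv. -/
noncomputable def MarkovOp (C : ℝ → ℝ → ℝ) (f : ℝ → ℝ) (u : ℝ) : ℝ :=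
  deriv (fun x => ∫ v in (0:ℝ)..1, deriv (fun w => C x w) v * f v) u

/-!
Slicing an antitone `g` into its superlevel sets `[0, σ t]`, `σ = superlevelSup g` (layer cake),
and applying Fubini gives `markovIntegral C g x = g 1 * x + ∫_{g 1}^{g 0} C(x, σ t) dt`: a linear
term plus a positive mixture of the sections `C(·, v)`. If the sections are concave (convex), this
primitive of `T_C g` is therefore concave (convex) and Lipschitz, so its derivative agrees a.e. with
its antitone (monotone) right derivative. Conversely `T_C 1_{[0, v]} = ∂₁C(·, v)` a.e., and a
Lipschitz function whose derivative is a.e. antitone is concave by the fundamental theorem of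
calculus.
-/

open Topology

lemma ae_restrict_Icc_mem_Ioo (a b : ℝ) : ∀ᵐ x ∂(volume.restrict (Icc a b)), x ∈ Ioo a b := by
  rw [← Measure.restrict_congr_set Ioo_ae_eq_Icc]
  exact ae_restrict_mem measurableSet_Ioo

lemma AntitoneOn.exists_antitone_eqOn_Icc {g : ℝ → ℝ} {a b : ℝ} (hab : a ≤ b)
    (hg : AntitoneOn g (Icc a b)) : ∃ g' : ℝ → ℝ, Antitone g' ∧ EqOn g g' (Icc a b) :=
  hg.exists_antitone_extension
    ⟨g b, by rintro _ ⟨w, hw, rfl⟩; exact hg hw ⟨hab, le_rfl⟩ hw.2⟩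
    ⟨g a, by rintro _ ⟨w, hw, rfl⟩; exact hg ⟨le_rfl, hab⟩ hw hw.1⟩

section Calculus

variable {f h : ℝ → ℝ} {a b : ℝ} {K : NNReal}

lemma MonotoneOn.lipschitzOnWith_one {s : Set ℝ} (hf : MonotoneOn f s)
    (hsub : ∀ x ∈ s, ∀ y ∈ s, x ≤ y → f y - f x ≤ y - x) : LipschitzOnWith 1 f s := by
  refine LipschitzOnWith.of_le_add_mul 1 fun x hx y hy => ?_
  rw [NNReal.coe_one, one_mul, Real.dist_eq]
  rcases le_total x y with hxy | hyx
  · linarith [hf hx hy hxy, abs_nonneg (x - y)]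
  · linarith [hsub y hy x hx hyx, le_abs_self (x - y)]

lemma LipschitzOnWith.abs_derivWithin_Ioi_le {s : Set ℝ} {x : ℝ} (hf : LipschitzOnWith K f s)
    (hx : x ∈ s) (hs : s ∈ 𝓝[>] x) : |derivWithin f (Ioi x) x| ≤ K := by
  by_cases hd : DifferentiableWithinAt ℝ f (Ioi x) x
  · refine le_of_tendsto
      ((hasDerivWithinAt_iff_tendsto_slope' self_notMem_Ioi).1 hd.hasDerivWithinAt).abs ?_
    filter_upwards [hs, self_mem_nhdsWithin] with y hy (hxy : x < y)
    rw [slope_def_field, abs_div, div_le_iff₀ (abs_pos.2 (sub_ne_zero.2 hxy.ne'))]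
    simpa [Real.dist_eq] using hf.dist_le_mul y hy x hx
  · simp [derivWithin_zero_of_not_differentiableWithinAt hd]

lemma ConcaveOn.antitoneOn_rightDeriv {S : Set ℝ} (hf : ConcaveOn ℝ S f) :
    AntitoneOn (fun x => derivWithin f (Ioi x) x) (interior S) := by
  intro x hx y hy hxy
  simpa [derivWithin.neg] using hf.neg.monotoneOn_rightDeriv hx hy hxy

lemma ConcaveOn.exists_antitoneOn_ae_eq_deriv (hf : ConcaveOn ℝ (Icc a b) f)
    (hL : LipschitzOnWith K f (Icc a b)) :
    ∃ h : ℝ → ℝ, AntitoneOn h (Icc a b) ∧ deriv f =ᵐ[volume.restrict (Icc a b)] h := by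
  have hanti : AntitoneOn (fun x => derivWithin f (Ioi x) x) (Ioo a b) := by
    simpa using hf.antitoneOn_rightDeriv
  have hbdd : ∀ x ∈ Ioo a b, |derivWithin f (Ioi x) x| ≤ K := fun x hx =>
    hL.abs_derivWithin_Ioi_le (Ioo_subset_Icc_self hx)
      (mem_nhdsWithin_of_mem_nhds (Icc_mem_nhds hx.1 hx.2))
  obtain ⟨h, hh, hext⟩ := hanti.exists_antitone_extension
    ⟨-K, by rintro _ ⟨x, hx, rfl⟩; exact (abs_le.1 (hbdd x hx)).1⟩
    ⟨K, by rintro _ ⟨x, hx, rfl⟩; exact (abs_le.1 (hbdd x hx)).2⟩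
  refine ⟨h, hh.antitoneOn _, ?_⟩
  have hdiff := (ae_restrict_iff' measurableSet_Icc).2 hL.ae_differentiableWithinAt_of_mem_real
  filter_upwards [hdiff, ae_restrict_Icc_mem_Ioo a b] with x hxd hx
  rw [← hext hx]
  exact ((hxd.differentiableAt (Icc_mem_nhds hx.1 hx.2)).derivWithin
    (uniqueDiffWithinAt_Ioi x)).symm

lemma ConvexOn.exists_monotoneOn_ae_eq_deriv (hf : ConvexOn ℝ (Icc a b) f)
    (hL : LipschitzOnWith K f (Icc a b)) :
    ∃ h : ℝ → ℝ, MonotoneOn h (Icc a b) ∧ deriv f =ᵐ[volume.restrict (Icc a b)] h := by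
  obtain ⟨h, hh, hae⟩ := hf.neg.exists_antitoneOn_ae_eq_deriv hL.neg
  refine ⟨-h, hh.neg, ?_⟩
  filter_upwards [hae] with x hx
  simpa [deriv.neg'] using congrArg Neg.neg hx

lemma LipschitzOnWith.integral_eq_sub_of_ae_eq_deriv {x y : ℝ}
    (hf : LipschitzOnWith K f (Icc a b)) (hd : deriv f =ᵐ[volume.restrict (Icc a b)] h)
    (hx : x ∈ Icc a b) (hy : y ∈ Icc a b) : ∫ t in x..y, h t = f y - f x := by
  rw [← (hf.mono (uIcc_subset_Icc hx hy)).absolutelyContinuousOnInterval.integral_deriv_eq_sub]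
  refine intervalIntegral.integral_congr_ae ?_
  filter_upwards [(ae_restrict_iff' measurableSet_Icc).1 hd] with t ht htxy
  exact (ht (uIcc_subset_Icc hx hy (uIoc_subset_uIcc htxy))).symm

lemma concaveOn_of_ae_eq_deriv_antitoneOn (hf : LipschitzOnWith K f (Icc a b))
    (hh : AntitoneOn h (Icc a b)) (hd : deriv f =ᵐ[volume.restrict (Icc a b)] h) :
    ConcaveOn ℝ (Icc a b) f := by
  refine concaveOn_of_slope_anti_adjacent (convex_Icc a b) fun {x y z} hx hz hxy hyz => ?_
  have hy : y ∈ Icc a b := ⟨hx.1.trans hxy.le, hyz.le.trans hz.2⟩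
  have hint : ∀ {p q}, p ∈ Icc a b → q ∈ Icc a b → IntervalIntegrable h volume p q :=
    fun hp hq => (hh.mono (uIcc_subset_Icc hp hq)).intervalIntegrable
  have hleft : h y * (y - x) ≤ f y - f x := by
    rw [← hf.integral_eq_sub_of_ae_eq_deriv hd hx hy, mul_comm, ← smul_eq_mul,
      ← intervalIntegral.integral_const]
    exact intervalIntegral.integral_mono_on hxy.le intervalIntegrable_const (hint hx hy)
      fun t ht => hh ⟨hx.1.trans ht.1, ht.2.trans hy.2⟩ hy ht.2
  have hright : f z - f y ≤ h y * (z - y) := by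
    rw [← hf.integral_eq_sub_of_ae_eq_deriv hd hy hz, mul_comm, ← smul_eq_mul,
      ← intervalIntegral.integral_const]
    exact intervalIntegral.integral_mono_on hyz.le (hint hy hz) intervalIntegrable_const
      fun t ht => hh hy ⟨hy.1.trans ht.1, ht.2.trans hz.2⟩ ht.1
  calc (f z - f y) / (z - y) ≤ h y := (div_le_iff₀ (sub_pos.2 hyz)).2 hright
    _ ≤ (f y - f x) / (y - x) := (le_div_iff₀ (sub_pos.2 hxy)).2 hleft

lemma convexOn_of_ae_eq_deriv_monotoneOn (hf : LipschitzOnWith K f (Icc a b))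
    (hh : MonotoneOn h (Icc a b)) (hd : deriv f =ᵐ[volume.restrict (Icc a b)] h) :
    ConvexOn ℝ (Icc a b) f := by
  have hd' : deriv (-f) =ᵐ[volume.restrict (Icc a b)] -h := by
    filter_upwards [hd] with x hx
    simp [deriv.neg', hx]
  simpa using (concaveOn_of_ae_eq_deriv_antitoneOn hf.neg hh.neg hd').neg

end Calculus

section ParametricIntegral

variable {F : ℝ → ℝ → ℝ} {s : Set ℝ} {α β : ℝ}

lemma concaveOn_intervalIntegral (hαβ : α ≤ β) (hF : ∀ t ∈ Icc α β, ConcaveOn ℝ s fun x => F x t)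
    (hint : ∀ x ∈ s, IntervalIntegrable (F x) volume α β) :
    ConcaveOn ℝ s fun x => ∫ t in α..β, F x t := by
  refine ⟨(hF α ⟨le_rfl, hαβ⟩).1, fun x hx y hy a b ha hb hab => ?_⟩
  have hxy : a • x + b • y ∈ s := (hF α ⟨le_rfl, hαβ⟩).1 hx hy ha hb hab
  simp only [smul_eq_mul]
  rw [← intervalIntegral.integral_const_mul, ← intervalIntegral.integral_const_mul,
    ← intervalIntegral.integral_add ((hint x hx).const_mul a) ((hint y hy).const_mul b)]
  exact intervalIntegral.integral_mono_on hαβ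
    (((hint x hx).const_mul a).add ((hint y hy).const_mul b)) (hint _ hxy)
    fun t ht => by simpa using (hF t ht).2 hx hy ha hb hab

lemma convexOn_intervalIntegral (hαβ : α ≤ β) (hF : ∀ t ∈ Icc α β, ConvexOn ℝ s fun x => F x t)
    (hint : ∀ x ∈ s, IntervalIntegrable (F x) volume α β) :
    ConvexOn ℝ s fun x => ∫ t in α..β, F x t := by
  have := concaveOn_intervalIntegral (F := fun x t => -F x t) hαβ (fun t ht => (hF t ht).neg)
    fun x hx => (hint x hx).neg
  simp only [intervalIntegral.integral_neg] at this
  exact neg_concaveOn_iff.1 this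

lemma lipschitzOnWith_intervalIntegral (hF : ∀ t ∈ uIoc α β, LipschitzOnWith K (fun x => F x t) s)
    (hint : ∀ x ∈ s, IntervalIntegrable (F x) volume α β) :
    LipschitzOnWith (K * ‖β - α‖₊) (fun x => ∫ t in α..β, F x t) s := by
  refine LipschitzOnWith.of_dist_le_mul fun x hx y hy => ?_
  rw [dist_eq_norm, ← intervalIntegral.integral_sub (hint x hx) (hint y hy), NNReal.coe_mul,
    coe_nnnorm, Real.norm_eq_abs (β - α), mul_right_comm]
  exact intervalIntegral.norm_integral_le_of_norm_le_const fun t ht => by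
    simpa [dist_eq_norm] using (hF t ht).dist_le_mul x hx y hy

end ParametricIntegral

/-- `[0, superlevelSup g t]` is, up to a null set, the superlevel set `{t ≤ g}` in `[0, 1]` of an
antitone `g`; when that set is empty, the junk value `sSup ∅ = 0` is the right one. -/
noncomputable def superlevelSup (g : ℝ → ℝ) (t : ℝ) : ℝ := sSup {w ∈ Icc (0:ℝ) 1 | t ≤ g w}

lemma superlevelSup_mem_Icc (g : ℝ → ℝ) (t : ℝ) : superlevelSup g t ∈ Icc (0:ℝ) 1 :=
  ⟨Real.sSup_nonneg fun _ hw => hw.1.1, Real.sSup_le (fun _ hw => hw.1.2) zero_le_one⟩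

lemma antitone_superlevelSup (g : ℝ → ℝ) : Antitone (superlevelSup g) := by
  intro t t' htt'
  rcases eq_empty_or_nonempty {w ∈ Icc (0:ℝ) 1 | t' ≤ g w} with hemp | hne
  · rw [superlevelSup, hemp, Real.sSup_empty]
    exact (superlevelSup_mem_Icc g t).1
  · exact csSup_le_csSup ⟨1, fun _ hw => hw.1.2⟩ hne fun w hw => ⟨hw.1, htt'.trans hw.2⟩

lemma Ioc_inter_superlevel_ae_eq {g : ℝ → ℝ} (hg : Antitone g) (t : ℝ) :
    (Ioc 0 1 ∩ {w | t ≤ g w} : Set ℝ) =ᵐ[volume] Ioc 0 (superlevelSup g t) := by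
  set S := {w ∈ Icc (0:ℝ) 1 | t ≤ g w}
  have hbdd : BddAbove S := ⟨1, fun _ hw => hw.1.2⟩
  have hsub : Ioc 0 1 ∩ {w | t ≤ g w} ⊆ Ioc 0 (superlevelSup g t) :=
    fun w hw => ⟨hw.1.1, le_csSup hbdd ⟨Ioc_subset_Icc_self hw.1, hw.2⟩⟩
  have hsup : Ioo 0 (superlevelSup g t) ⊆ Ioc 0 1 ∩ {w | t ≤ g w} := by
    intro w hw
    change w ∈ Ioo 0 (sSup S) at hw
    have hne : S.Nonempty := by
      refine nonempty_iff_ne_empty.2 fun hemp => ?_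
      rw [hemp, Real.sSup_empty] at hw
      exact (hw.1.trans hw.2).false
    obtain ⟨w', hw'S, hww'⟩ := exists_lt_of_lt_csSup hne hw.2
    exact ⟨⟨hw.1, hww'.le.trans hw'S.1.2⟩, hw'S.2.trans (hg hww'.le)⟩
  exact hsub.eventuallyLE.antisymm (Ioo_ae_eq_Ioc.symm.le.trans hsup.eventuallyLE)

lemma setIntegral_Ioc_indicator_Iic_const {a b c : ℝ} (hc : c ∈ Icc a b) (y : ℝ) :
    ∫ t in Ioc a b, (Iic c).indicator (fun _ => y) t = (c - a) * y := by
  rw [integral_indicator_const _ measurableSet_Iic, measureReal_restrict_apply measurableSet_Iic,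
    Iic_inter_Ioc_of_le hc.2, Real.volume_real_Ioc_of_le hc.1, smul_eq_mul]

theorem integral_mul_antitone_eq {φ g : ℝ → ℝ} (hφ : IntervalIntegrable φ volume 0 1)
    (hg : Antitone g) :
    ∫ w in (0:ℝ)..1, φ w * g w =
      g 1 * (∫ w in (0:ℝ)..1, φ w) + ∫ t in g 1..g 0, ∫ w in (0:ℝ)..superlevelSup g t, φ w := by
  have hg10 : g 1 ≤ g 0 := hg zero_le_one
  rw [intervalIntegrable_iff_integrableOn_Ioc_of_le zero_le_one] at hφ
  have hlayer : ∀ w ∈ Ioc (0:ℝ) 1, φ w * g w =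
      g 1 * φ w + ∫ t in Ioc (g 1) (g 0), (Iic (g w)).indicator (fun _ => φ w) t := by
    intro w hw
    rw [setIntegral_Ioc_indicator_Iic_const ⟨hg hw.2, hg hw.1.le⟩]
    ring
  have hfubini : Integrable (Function.uncurry fun w t => (Iic (g w)).indicator (fun _ => φ w) t)
      ((volume.restrict (Ioc 0 1)).prod (volume.restrict (Ioc (g 1) (g 0)))) :=
    (hφ.comp_fst _).indicator (measurableSet_le measurable_snd (hg.measurable.comp measurable_fst))
  have hinner : ∀ t, ∫ w in Ioc 0 1, (Iic (g w)).indicator (fun _ => φ w) t =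
      ∫ w in (0:ℝ)..superlevelSup g t, φ w := by
    intro t
    rw [intervalIntegral.integral_of_le (superlevelSup_mem_Icc g t).1,
      ← setIntegral_congr_set (Ioc_inter_superlevel_ae_eq hg t),
      ← setIntegral_indicator (measurableSet_le measurable_const hg.measurable)]
    rfl
  have hswap := integral_integral_swap hfubini
  simp only [hinner] at hswap
  have hlayer_int : Integrable
      (fun w => ∫ t in Ioc (g 1) (g 0), (Iic (g w)).indicator (fun _ => φ w) t)
      (volume.restrict (Ioc 0 1)) := hfubini.integral_prod_left
  rw [intervalIntegral.integral_of_le zero_le_one, intervalIntegral.integral_of_le zero_le_one,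
    intervalIntegral.integral_of_le hg10, setIntegral_congr_fun measurableSet_Ioc hlayer,
    integral_add (hφ.const_mul _) hlayer_int, integral_const_mul, hswap]

lemma integral_mul_indicator_Iic {φ : ℝ → ℝ} {a b v : ℝ} (hv : v ∈ Icc a b) :
    ∫ w in a..b, φ w * (Iic v).indicator 1 w = ∫ w in a..v, φ w := by
  have hind : (fun w => φ w * (Iic v).indicator 1 w) = (Iic v).indicator φ := by
    ext w
    by_cases hw : w ∈ Iic v <;> simp [hw]
  rw [hind, intervalIntegral.integral_of_le (hv.1.trans hv.2), intervalIntegral.integral_of_le hv.1,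
    setIntegral_indicator measurableSet_Iic, Ioc_inter_Iic, min_eq_right hv.2]

lemma antitone_indicator_Iic_one (v : ℝ) : Antitone ((Iic v).indicator (1 : ℝ → ℝ)) := by
  intro a b hab
  by_cases hb : b ≤ v
  · simp [indicator, hb, hab.trans hb]
  · by_cases ha : a ≤ v <;> simp [indicator, ha, hb]

lemma integrableOn_indicator_Iic_one (v : ℝ) :
    IntegrableOn ((Iic v).indicator (1 : ℝ → ℝ)) (Icc 0 1) :=
  (integrableOn_const measure_Icc_lt_top.ne).indicator measurableSet_Iic

namespace IsCopula

variable {C : ℝ → ℝ → ℝ} {x v : ℝ}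

lemma flip (hC : IsCopula C) : IsCopula fun u v => C v u :=
  ⟨hC.2.1, hC.1, fun u₁ u₂ v₁ v₂ h₁ h₂ h₃ h₄ hu hv => by
    linarith [hC.2.2 v₁ v₂ u₁ u₂ h₃ h₄ h₁ h₂ hv hu]⟩

lemma monotoneOn_right (hC : IsCopula C) (hx : x ∈ Icc (0:ℝ) 1) : MonotoneOn (C x) (Icc 0 1) :=
  fun v₁ h₁ v₂ h₂ hv => by
    linarith [hC.2.2 0 x v₁ v₂ ⟨le_rfl, zero_le_one⟩ hx h₁ h₂ hx.1 hv, (hC.2.1 v₁ h₁).1,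
      (hC.2.1 v₂ h₂).1]

lemma lipschitzOnWith_right (hC : IsCopula C) (hx : x ∈ Icc (0:ℝ) 1) :
    LipschitzOnWith 1 (C x) (Icc 0 1) :=
  (hC.monotoneOn_right hx).lipschitzOnWith_one fun v₁ h₁ v₂ h₂ hv => by
    linarith [hC.2.2 x 1 v₁ v₂ hx ⟨zero_le_one, le_rfl⟩ h₁ h₂ hx.2 hv, (hC.2.1 v₁ h₁).2,
      (hC.2.1 v₂ h₂).2]

lemma lipschitzOnWith_left (hC : IsCopula C) (hv : v ∈ Icc (0:ℝ) 1) :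
    LipschitzOnWith 1 (fun u => C u v) (Icc 0 1) :=
  hC.flip.lipschitzOnWith_right hv

lemma intervalIntegrable_deriv_right (hC : IsCopula C) (hx : x ∈ Icc (0:ℝ) 1) :
    IntervalIntegrable (deriv (C x)) volume 0 1 :=
  (by simpa using hC.lipschitzOnWith_right hx : LipschitzOnWith 1 (C x) (uIcc 0 1))
    |>.absolutelyContinuousOnInterval.intervalIntegrable_deriv

lemma integral_deriv_right (hC : IsCopula C) (hx : x ∈ Icc (0:ℝ) 1) (hv : v ∈ Icc (0:ℝ) 1) :
    ∫ w in (0:ℝ)..v, deriv (C x) w = C x v := by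
  rw [((hC.lipschitzOnWith_right hx).mono (uIcc_subset_Icc ⟨le_rfl, zero_le_one⟩ hv))
    |>.absolutelyContinuousOnInterval.integral_deriv_eq_sub, (hC.1 x hx).1, sub_zero]

end IsCopula

noncomputable def markovIntegral (C : ℝ → ℝ → ℝ) (f : ℝ → ℝ) (x : ℝ) : ℝ :=
  ∫ v in (0:ℝ)..1, deriv (fun w => C x w) v * f v

lemma markovOp_eq_deriv (C : ℝ → ℝ → ℝ) (f : ℝ → ℝ) : MarkovOp C f = deriv (markovIntegral C f) :=
  rfl

lemma markovIntegral_congr_ae {C : ℝ → ℝ → ℝ} {f g : ℝ → ℝ}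
    (hfg : f =ᵐ[volume.restrict (Icc (0:ℝ) 1)] g) : markovIntegral C f = markovIntegral C g := by
  ext x
  refine intervalIntegral.integral_congr_ae ?_
  filter_upwards [(ae_restrict_iff' measurableSet_Icc).1 hfg] with w hw hw01
  rw [uIoc_of_le zero_le_one] at hw01
  rw [hw (Ioc_subset_Icc_self hw01)]

lemma exists_antitone_markovOp_eq {C : ℝ → ℝ → ℝ} {f : ℝ → ℝ}
    (hf : ∃ g : ℝ → ℝ, AntitoneOn g (Icc (0:ℝ) 1) ∧ f =ᵐ[volume.restrict (Icc (0:ℝ) 1)] g) :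
    ∃ g : ℝ → ℝ, Antitone g ∧ MarkovOp C f = MarkovOp C g := by
  obtain ⟨g, hg, hfg⟩ := hf
  obtain ⟨g', hg', hgg'⟩ := hg.exists_antitone_eqOn_Icc zero_le_one
  refine ⟨g', hg', ?_⟩
  rw [markovOp_eq_deriv, markovOp_eq_deriv, markovIntegral_congr_ae (hfg.trans ?_)]
  exact (ae_restrict_iff' measurableSet_Icc).2 (ae_of_all _ hgg')

namespace IsCopula

variable {C : ℝ → ℝ → ℝ} {g : ℝ → ℝ}

lemma antitone_section_superlevelSup (hC : IsCopula C) {x : ℝ} (hx : x ∈ Icc (0:ℝ) 1) :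
    Antitone fun t => C x (superlevelSup g t) := fun _ _ h =>
  hC.monotoneOn_right hx (superlevelSup_mem_Icc g _) (superlevelSup_mem_Icc g _)
    (antitone_superlevelSup g h)

lemma markovIntegral_eq_of_antitone (hC : IsCopula C) (hg : Antitone g) {x : ℝ}
    (hx : x ∈ Icc (0:ℝ) 1) :
    markovIntegral C g x = g 1 * x + ∫ t in g 1..g 0, C x (superlevelSup g t) := by
  rw [markovIntegral, integral_mul_antitone_eq (hC.intervalIntegrable_deriv_right hx) hg,
    hC.integral_deriv_right hx ⟨zero_le_one, le_rfl⟩, (hC.1 x hx).2]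
  simp_rw [hC.integral_deriv_right hx (superlevelSup_mem_Icc g _)]

lemma concaveOn_markovIntegral (hC : IsCopula C) (hSI : StochIncr C) (hg : Antitone g) :
    ConcaveOn ℝ (Icc 0 1) (markovIntegral C g) :=
  (((LinearMap.mulLeft ℝ (g 1)).concaveOn (convex_Icc 0 1)).add
    (concaveOn_intervalIntegral (hg zero_le_one) (fun t _ => hSI _ (superlevelSup_mem_Icc g t))
      fun _ hx => (hC.antitone_section_superlevelSup hx).intervalIntegrable)).congr
    fun _ hx => (hC.markovIntegral_eq_of_antitone hg hx).symm

lemma convexOn_markovIntegral (hC : IsCopula C) (hSD : StochDecr C) (hg : Antitone g) :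
    ConvexOn ℝ (Icc 0 1) (markovIntegral C g) :=
  (((LinearMap.mulLeft ℝ (g 1)).convexOn (convex_Icc 0 1)).add
    (convexOn_intervalIntegral (hg zero_le_one) (fun t _ => hSD _ (superlevelSup_mem_Icc g t))
      fun _ hx => (hC.antitone_section_superlevelSup hx).intervalIntegrable)).congr
    fun _ hx => (hC.markovIntegral_eq_of_antitone hg hx).symm

lemma lipschitzOnWith_markovIntegral (hC : IsCopula C) (hg : Antitone g) :
    LipschitzOnWith (‖g 1‖₊ + ‖g 0 - g 1‖₊) (markovIntegral C g) (Icc 0 1) := by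
  have hsum := ((lipschitzWith_smul (g 1)).lipschitzOnWith (s := Icc (0:ℝ) 1)).add
    (lipschitzOnWith_intervalIntegral (α := g 1) (β := g 0)
      (fun t _ => hC.lipschitzOnWith_left (superlevelSup_mem_Icc g t))
      fun _ hx => (hC.antitone_section_superlevelSup hx).intervalIntegrable)
  rw [one_mul] at hsum
  refine LipschitzOnWith.of_dist_le_mul fun x hx y hy => ?_
  rw [hC.markovIntegral_eq_of_antitone hg hx, hC.markovIntegral_eq_of_antitone hg hy]
  exact hsum.dist_le_mul x hx y hy

lemma exists_antitoneOn_ae_eq_markovOp (hC : IsCopula C) (hSI : StochIncr C) (hg : Antitone g) :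
    ∃ h : ℝ → ℝ, AntitoneOn h (Icc 0 1) ∧ MarkovOp C g =ᵐ[volume.restrict (Icc 0 1)] h :=
  (hC.concaveOn_markovIntegral hSI hg).exists_antitoneOn_ae_eq_deriv
    (hC.lipschitzOnWith_markovIntegral hg)

lemma exists_monotoneOn_ae_eq_markovOp (hC : IsCopula C) (hSD : StochDecr C) (hg : Antitone g) :
    ∃ h : ℝ → ℝ, MonotoneOn h (Icc 0 1) ∧ MarkovOp C g =ᵐ[volume.restrict (Icc 0 1)] h :=
  (hC.convexOn_markovIntegral hSD hg).exists_monotoneOn_ae_eq_deriv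
    (hC.lipschitzOnWith_markovIntegral hg)

lemma markovIntegral_indicator_Iic (hC : IsCopula C) {x v : ℝ} (hx : x ∈ Icc (0:ℝ) 1)
    (hv : v ∈ Icc (0:ℝ) 1) : markovIntegral C ((Iic v).indicator 1) x = C x v := by
  rw [markovIntegral, integral_mul_indicator_Iic hv, hC.integral_deriv_right hx hv]

lemma markovOp_indicator_Iic_ae_eq (hC : IsCopula C) {v : ℝ} (hv : v ∈ Icc (0:ℝ) 1) :
    MarkovOp C ((Iic v).indicator 1) =ᵐ[volume.restrict (Icc 0 1)] deriv fun u => C u v := by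
  filter_upwards [ae_restrict_Icc_mem_Ioo 0 1] with u hu
  refine EventuallyEq.deriv_eq ?_
  filter_upwards [Ioo_mem_nhds hu.1 hu.2] with x hx
  exact hC.markovIntegral_indicator_Iic (Ioo_subset_Icc_self hx) hv

lemma stochIncr_of_markovOp (hC : IsCopula C)
    (hT : ∀ v ∈ Icc (0:ℝ) 1, ∃ h : ℝ → ℝ, AntitoneOn h (Icc 0 1) ∧
      MarkovOp C ((Iic v).indicator 1) =ᵐ[volume.restrict (Icc 0 1)] h) : StochIncr C := by
  intro v hv
  obtain ⟨h, hh, hae⟩ := hT v hv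
  exact concaveOn_of_ae_eq_deriv_antitoneOn (hC.lipschitzOnWith_left hv) hh
    ((hC.markovOp_indicator_Iic_ae_eq hv).symm.trans hae)

lemma stochDecr_of_markovOp (hC : IsCopula C)
    (hT : ∀ v ∈ Icc (0:ℝ) 1, ∃ h : ℝ → ℝ, MonotoneOn h (Icc 0 1) ∧
      MarkovOp C ((Iic v).indicator 1) =ᵐ[volume.restrict (Icc 0 1)] h) : StochDecr C := by
  intro v hv
  obtain ⟨h, hh, hae⟩ := hT v hv
  exact convexOn_of_ae_eq_deriv_monotoneOn (hC.lipschitzOnWith_left hv) hh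
    ((hC.markovOp_indicator_Iic_ae_eq hv).symm.trans hae)

end IsCopula

theorem stochIncr_iff_markovOp_antitone (C : ℝ → ℝ → ℝ) (hC : IsCopula C) :
    (StochIncr C ↔
      ∀ f : ℝ → ℝ, IntegrableOn f (Icc (0:ℝ) 1) →
        (∃ g : ℝ → ℝ, AntitoneOn g (Icc (0:ℝ) 1) ∧
          f =ᵐ[volume.restrict (Icc (0:ℝ) 1)] g) →
        ∃ h : ℝ → ℝ, AntitoneOn h (Icc (0:ℝ) 1) ∧
          MarkovOp C f =ᵐ[volume.restrict (Icc (0:ℝ) 1)] h) ∧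
    (StochDecr C ↔
      ∀ f : ℝ → ℝ, IntegrableOn f (Icc (0:ℝ) 1) →
        (∃ g : ℝ → ℝ, AntitoneOn g (Icc (0:ℝ) 1) ∧
          f =ᵐ[volume.restrict (Icc (0:ℝ) 1)] g) →
        ∃ h : ℝ → ℝ, MonotoneOn h (Icc (0:ℝ) 1) ∧
          MarkovOp C f =ᵐ[volume.restrict (Icc (0:ℝ) 1)] h) := by
  have hind : ∀ v : ℝ, ∃ g : ℝ → ℝ, AntitoneOn g (Icc (0:ℝ) 1) ∧
      (Iic v).indicator 1 =ᵐ[volume.restrict (Icc (0:ℝ) 1)] g :=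
    fun v => ⟨_, (antitone_indicator_Iic_one v).antitoneOn _, EventuallyEq.rfl⟩
  refine ⟨⟨fun hSI f _ hf => ?_, fun hT => hC.stochIncr_of_markovOp fun v _ =>
      hT _ (integrableOn_indicator_Iic_one v) (hind v)⟩,
    ⟨fun hSD f _ hf => ?_, fun hT => hC.stochDecr_of_markovOp fun v _ =>
      hT _ (integrableOn_indicator_Iic_one v) (hind v)⟩⟩
  · obtain ⟨g, hg, hfg⟩ := exists_antitone_markovOp_eq hf
    exact hfg ▸ hC.exists_antitoneOn_ae_eq_markovOp hSI hg
  · obtain ⟨g, hg, hfg⟩ := exists_antitone_markovOp_eq hf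
    exact hfg ▸ hC.exists_monotoneOn_ae_eq_markovOp hSD hg
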